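/- Let H and K be complex Hilbert spaces, let U be a unitary operator on H, and let G : H → K be a bounded operator. For z ∈ ℂ with |z| ≠ 1 define ψ(z) := i·G (U + z)(U − z)⁻¹ G* (the operator U − z·I is invertible since U is unitary). Then for all z₁, z₂ ∈ ℂ with |z₁| ≠ 1, |z₂| ≠ 1 and z₂ ≠ 0, one has ψ(z₁) − ψ(z₂)* = 2i (z₁ − 1/\overline{z₂}) · G U (U − z₁)⁻¹ (U − (1/\overline{z₂}))⁻¹ G*. -/

import Mathlib

noncomputable section

variable {H K : Type*} [NormedAddCommGroup H] [InnerProductSpace ℂ H] [CompleteSpace H]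
  [NormedAddCommGroup K] [InnerProductSpace ℂ K] [CompleteSpace K]

/-- `ψ(z) = i G (U + z)(U − z)⁻¹ G*`. -/
def psi (G : H →L[ℂ] K) (U : H →L[ℂ] H) (z : ℂ) : K →L[ℂ] K :=
  Complex.I • ((G.comp ((U + z • 1) * Ring.inverse (U - z • 1))).comp
    (ContinuousLinearMap.adjoint G))

private lemma inv_eq' {A : Type*} [Ring A] {x y : A} (h1 : x * y = 1) (h2 : y * x = 1) :
    Ring.inverse x = y := by
  have hx : IsUnit x := ⟨⟨x, y, h1, h2⟩, rfl⟩
  have h3 := Ring.inverse_mul_cancel x hx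
  calc Ring.inverse x = Ring.inverse x * (x * y) := by rw [h1, mul_one]
    _ = (Ring.inverse x * x) * y := by rw [mul_assoc]
    _ = y := by rw [h3, one_mul]

private lemma inv_comm' {A : Type*} [Ring A] {a x : A} (ha : IsUnit a) (h : a * x = x * a) :
    Ring.inverse a * x = x * Ring.inverse a := by
  have h1 := Ring.inverse_mul_cancel a ha
  have h2 := Ring.mul_inverse_cancel a ha
  calc Ring.inverse a * x = Ring.inverse a * x * (a * Ring.inverse a) := by rw [h2, mul_one]
    _ = Ring.inverse a * (x * a) * Ring.inverse a := by simp only [mul_assoc]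
    _ = Ring.inverse a * (a * x) * Ring.inverse a := by rw [h]
    _ = (Ring.inverse a * a) * (x * Ring.inverse a) := by simp only [mul_assoc]
    _ = x * Ring.inverse a := by rw [h1, one_mul]

private lemma star_ringInverse' {A : Type*} [Ring A] [StarRing A] {x : A} (hx : IsUnit x) :
    star (Ring.inverse x) = Ring.inverse (star x) := by
  refine (inv_eq' ?_ ?_).symm
  · rw [← star_mul, Ring.inverse_mul_cancel x hx, star_one]
  · rw [← star_mul, Ring.mul_inverse_cancel x hx, star_one]

private lemma core_identity {A : Type*} [Ring A] [Algebra ℂ A] (u v : A) (z₁ w c : ℂ)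
    (huv : u * v = 1) (hvu : v * u = 1) (hcw : c * w = 1)
    (ha : IsUnit (u - z₁ • 1)) (hb : IsUnit (u - w • 1)) :
    Complex.I • ((u + z₁ • 1) * Ring.inverse (u - z₁ • 1)) +
      Complex.I • (Ring.inverse (v - c • 1) * (v + c • 1)) =
    (2 * Complex.I * (z₁ - w)) •
      (u * Ring.inverse (u - z₁ • 1) * Ring.inverse (u - w • 1)) := by
  set a : A := u - z₁ • 1 with ha'
  set b : A := u - w • 1 with hb'
  set ai := Ring.inverse a with hai'
  set bi := Ring.inverse b with hbi'
  have haa : ai * a = 1 := Ring.inverse_mul_cancel a ha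
  have haa' : a * ai = 1 := Ring.mul_inverse_cancel a ha
  have hbb : bi * b = 1 := Ring.inverse_mul_cancel b hb
  have hbb' : b * bi = 1 := Ring.mul_inverse_cancel b hb
  have hub : b * u = u * b := by
    simp only [hb', sub_mul, mul_sub, smul_mul_assoc, mul_smul_comm, one_mul, mul_one]
  have hvb : b * v = v * b := by
    simp only [hb', sub_mul, mul_sub, smul_mul_assoc, mul_smul_comm, one_mul, mul_one, huv, hvu]
  have hba : b * a = a * b := by
    simp only [ha', hb', sub_mul, mul_sub, smul_mul_assoc, mul_smul_comm, one_mul, mul_one,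
      smul_smul, mul_comm w z₁, smul_sub]
    module
  have hbiu : bi * u = u * bi := inv_comm' hb hub
  have hbiv : bi * v = v * bi := inv_comm' hb hvb
  have haib : ai * b = b * ai := inv_comm' ha hba.symm
  -- inverse of (v - c • 1)
  have h1 : v * (bi * u) = bi := by
    rw [← mul_assoc, ← hbiv, mul_assoc, hvu, mul_one]
  have h2 : (1 : A) - c • u = (-c) • b := by
    rw [hb']
    simp [smul_sub, smul_smul, hcw, sub_eq_add_neg, add_comm]
  have key1 : (v - c • 1) * ((-w) • (bi * u)) = 1 := by
    calc (v - c • 1) * ((-w) • (bi * u))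
        = (-w) • ((v - c • 1) * (bi * u)) := by rw [mul_smul_comm]
      _ = (-w) • (v * (bi * u) - c • (bi * u)) := by rw [sub_mul, smul_mul_assoc, one_mul]
      _ = (-w) • (bi * 1 - bi * (c • u)) := by rw [h1, mul_one, mul_smul_comm]
      _ = (-w) • (bi * ((1 : A) - c • u)) := by rw [← mul_sub]
      _ = (-w) • (bi * ((-c) • b)) := by rw [h2]
      _ = ((-w) * (-c)) • (bi * b) := by simp [mul_smul_comm, smul_smul]
      _ = 1 := by rw [hbb]; simp [neg_mul_neg, mul_comm w c, hcw]
  have key2 : ((-w) • (bi * u)) * (v - c • 1) = 1 := by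
    calc ((-w) • (bi * u)) * (v - c • 1)
        = (-w) • ((bi * u) * (v - c • 1)) := by rw [smul_mul_assoc]
      _ = (-w) • (bi * (u * v) - c • (bi * u)) := by
          rw [mul_sub, mul_smul_comm, mul_one, mul_assoc]
      _ = (-w) • (bi * 1 - bi * (c • u)) := by rw [huv, mul_smul_comm]
      _ = (-w) • (bi * ((1 : A) - c • u)) := by rw [← mul_sub]
      _ = (-w) • (bi * ((-c) • b)) := by rw [h2]
      _ = ((-w) * (-c)) • (bi * b) := by simp [mul_smul_comm, smul_smul]
      _ = 1 := by rw [hbb]; simp [neg_mul_neg, mul_comm w c, hcw]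
  have hVinv : Ring.inverse (v - c • 1) = (-w) • (bi * u) := inv_eq' key1 key2
  rw [hVinv]
  have hM2 : ((-w) • (bi * u)) * (v + c • 1) = -(bi * u) - w • bi := by
    calc ((-w) • (bi * u)) * (v + c • 1)
        = (-w) • (bi * (u * v) + c • (bi * u)) := by
          rw [smul_mul_assoc, mul_add, mul_smul_comm, mul_one, mul_assoc]
      _ = (-w) • bi + ((-w) * c) • (bi * u) := by rw [huv, mul_one, smul_add, smul_smul]
      _ = -(bi * u) - w • bi := by
          rw [neg_mul, mul_comm w c, hcw]
          simp [sub_eq_add_neg, add_comm]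
  rw [hM2]
  have hU : IsUnit (b * a) := hb.mul ha
  rw [← IsUnit.mul_left_inj hU]
  have e1 : ((u + z₁ • 1) * ai) * (b * a) = (u + z₁ • 1) * b := by
    rw [mul_assoc, ← mul_assoc ai b a, haib, mul_assoc, haa, mul_one]
  have e2 : (bi * u) * (b * a) = u * a := by
    rw [mul_assoc, ← mul_assoc u b a, ← hub, mul_assoc b u a, ← mul_assoc, hbb, one_mul]
  have e3 : bi * (b * a) = a := by rw [← mul_assoc, hbb, one_mul]
  have e4 : (u * ai * bi) * (b * a) = u := by
    rw [mul_assoc (u * ai) bi, e3, mul_assoc, haa, mul_one]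
  calc (Complex.I • ((u + z₁ • 1) * ai) + Complex.I • (-(bi * u) - w • bi)) * (b * a)
      = Complex.I • (((u + z₁ • 1) * ai) * (b * a)) +
        Complex.I • (-((bi * u) * (b * a)) - w • (bi * (b * a))) := by
        simp only [add_mul, sub_mul, neg_mul, smul_mul_assoc]
    _ = Complex.I • ((u + z₁ • 1) * b) + Complex.I • (-(u * a) - w • a) := by
        rw [e1, e2, e3]
    _ = (2 * Complex.I * (z₁ - w)) • u := by
        rw [ha', hb']
        simp only [mul_sub, sub_mul, add_mul, mul_add, smul_mul_assoc, mul_smul_comm,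
          smul_sub, smul_add, smul_smul, mul_one, one_mul, smul_neg, neg_sub]
        module
    _ = ((2 * Complex.I * (z₁ - w)) • (u * ai * bi)) * (b * a) := by
        rw [smul_mul_assoc, e4]

/-- The resolvent-type identity
`ψ(z₁) − ψ(z₂)* = 2i(z₁ − 1/conj z₂) · G U (U − z₁)⁻¹ (U − 1/conj z₂)⁻¹ G*`. -/
theorem psi_difference_identity (U : H →L[ℂ] H) (hU : U ∈ unitary (H →L[ℂ] H))
    (G : H →L[ℂ] K) (z₁ z₂ : ℂ) (hz₁ : ‖z₁‖ ≠ 1)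
    (hz₂ : ‖z₂‖ ≠ 1) (hz₂' : z₂ ≠ 0) :
    psi G U z₁ - star (psi G U z₂) =
      (2 * Complex.I * (z₁ - ((starRingEnd ℂ) z₂)⁻¹)) •
        ((G.comp (U * Ring.inverse (U - z₁ • 1) *
          Ring.inverse (U - (((starRingEnd ℂ) z₂)⁻¹) • 1))).comp
            (ContinuousLinearMap.adjoint G)) := by
  have hsp := spectrum.subset_circle_of_unitary (𝕜 := ℂ) hU
  have key : ∀ z : ℂ, ‖z‖ ≠ 1 → IsUnit (U - z • (1 : H →L[ℂ] H)) := by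
    intro z hz
    have hz' : z ∉ spectrum ℂ U := by
      intro hmem
      exact hz (by simpa using mem_sphere_zero_iff_norm.mp (hsp hmem))
    have h := spectrum.notMem_iff.mp hz'
    rw [Algebra.algebraMap_eq_smul_one] at h
    simpa [neg_sub] using h.neg
  set c : ℂ := (starRingEnd ℂ) z₂ with hc'
  set w : ℂ := c⁻¹ with hw'
  have hc0 : c ≠ 0 := by
    rw [hc', starRingEnd_apply]
    exact star_ne_zero.mpr hz₂'
  have hcw : c * w = 1 := mul_inv_cancel₀ hc0
  have hwabs : ‖w‖ ≠ 1 := by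
    rw [hw', hc', norm_inv]
    simp only [Complex.norm_conj]
    intro h
    exact hz₂ (by rwa [inv_eq_one] at h)
  have ha : IsUnit (U - z₁ • (1 : H →L[ℂ] H)) := key z₁ hz₁
  have hb : IsUnit (U - w • (1 : H →L[ℂ] H)) := key w hwabs
  have hz2unit : IsUnit (U - z₂ • (1 : H →L[ℂ] H)) := key z₂ hz₂
  obtain ⟨hvu, huv⟩ := (Unitary.mem_iff).mp hU
  set v : H →L[ℂ] H := star U with hv'
  -- compute the star of psi
  have hstarM : star ((U + z₂ • 1) * Ring.inverse (U - z₂ • 1)) =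
      Ring.inverse (v - c • 1) * (v + c • 1) := by
    have hs1 : star (U - z₂ • (1 : H →L[ℂ] H)) = v - c • 1 := by
      rw [star_sub, star_smul, star_one, hv', hc', starRingEnd_apply]
    have hs2 : star (U + z₂ • (1 : H →L[ℂ] H)) = v + c • 1 := by
      rw [star_add, star_smul, star_one, hv', hc', starRingEnd_apply]
    rw [star_mul, star_ringInverse' hz2unit, hs1, hs2]
  have hstar : star (psi G U z₂) =
      (-Complex.I) • ((G.comp (Ring.inverse (v - c • 1) * (v + c • 1))).comp
        (ContinuousLinearMap.adjoint G)) := by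
    rw [psi, star_smul]
    congr 1
    · rw [Complex.star_def, Complex.conj_I]
    · rw [ContinuousLinearMap.star_eq_adjoint, ContinuousLinearMap.adjoint_comp,
        ContinuousLinearMap.adjoint_comp, ContinuousLinearMap.adjoint_adjoint]
      rw [← ContinuousLinearMap.star_eq_adjoint
        ((U + z₂ • 1) * Ring.inverse (U - z₂ • 1)), hstarM]
      rw [← ContinuousLinearMap.comp_assoc]
  rw [hstar, psi]
  have hcore := core_identity (A := H →L[ℂ] H) U v z₁ w c huv hvu hcw ha hb
  calc Complex.I • ((G.comp ((U + z₁ • 1) * Ring.inverse (U - z₁ • 1))).comp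
        (ContinuousLinearMap.adjoint G)) -
      (-Complex.I) • ((G.comp (Ring.inverse (v - c • 1) * (v + c • 1))).comp
        (ContinuousLinearMap.adjoint G))
      = (G.comp (Complex.I • ((U + z₁ • 1) * Ring.inverse (U - z₁ • 1)) +
          Complex.I • (Ring.inverse (v - c • 1) * (v + c • 1)))).comp
          (ContinuousLinearMap.adjoint G) := by
        simp only [ContinuousLinearMap.comp_add, ContinuousLinearMap.add_comp,
          ContinuousLinearMap.comp_smul, ContinuousLinearMap.smul_comp, neg_smul, sub_neg_eq_add]
    _ = (G.comp ((2 * Complex.I * (z₁ - w)) •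
          (U * Ring.inverse (U - z₁ • 1) * Ring.inverse (U - w • 1)))).comp
          (ContinuousLinearMap.adjoint G) := by rw [hcore]
    _ = (2 * Complex.I * (z₁ - w)) • ((G.comp (U * Ring.inverse (U - z₁ • 1) *
          Ring.inverse (U - w • 1))).comp (ContinuousLinearMap.adjoint G)) := by
        simp only [ContinuousLinearMap.comp_smul, ContinuousLinearMap.smul_comp]
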